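/- Let R be a commutative ring, S a flat commutative R-algebra, and Q a quiver with finitely many vertices and finitely many edges. Let T be a representation of Q assigning to each vertex p a finitely generated projective R-module T(p) and to each edge f : p → p' an R-linear map T(f) : T(p) → T(p'). Define End(T) := {(e_p)_p ∈ ∏_p End_R(T(p)) : e_{p'} ∘ T(f) = T(f) ∘ e_p for every edge f : p → p'}, and let T ⊗ S be the representation over S with (T ⊗ S)(p) = T(p) ⊗_R S and (T ⊗ S)(f) = T(f) ⊗ id_S. Then the natural S-linear map End(T) ⊗_R S → End(T ⊗ S) (induced by (e_p)_p ⊗ s ↦ (s·(e_p ⊗ id_S))_p) is bijective. -/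

import Mathlib

/-!
`End(T)` is the equalizer of the two maps `a ↦ (a (tgt f) ∘ T f)_f` and
`a ↦ (T f ∘ a (src f))_f` from `∏_p End_R (T p)` to `∏_f Hom_R (T (src f), T (tgt f))`.
Base change along the flat algebra `S` preserves equalizers, and for finite products of finitely
presented modules (such as finitely generated projective ones)
`S ⊗ Hom_R (M, N) ≅ Hom_S (S ⊗ M, S ⊗ N)` compatibly with composition. Hence `S ⊗ End(T)` is
the equalizer of the base-changed maps, which is `End(T ⊗ S)`.
-/

open TensorProduct

section

variable {R S : Type*} [CommRing R] [CommRing S] [Algebra R S] [Module.Flat R S]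
variable {V E : Type*} [Fintype V] [Fintype E]
variable (src tgt : E → V)
variable (T : V → Type*)
variable [∀ p, AddCommGroup (T p)] [∀ p, Module R (T p)]
variable [∀ p, Module.Projective R (T p)] [∀ p, Module.Finite R (T p)]
variable (Tf : ∀ e : E, T (src e) →ₗ[R] T (tgt e))

/-- `End(T)`: the `R`-module of families `(e_p)_p` of endomorphisms commuting with
all the edge maps of the representation `T`. -/
def endRep : Submodule R (∀ p : V, T p →ₗ[R] T p) where
  carrier := {a | ∀ e : E, (a (tgt e)).comp (Tf e) = (Tf e).comp (a (src e))}
  add_mem' := by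
    intro a b ha hb e
    simp only [Pi.add_apply, LinearMap.add_comp, LinearMap.comp_add, ha e, hb e]
  zero_mem' := by
    intro e
    simp only [Pi.zero_apply, LinearMap.zero_comp, LinearMap.comp_zero]
  smul_mem' := by
    intro c a ha e
    simp only [Pi.smul_apply, LinearMap.smul_comp, LinearMap.comp_smul, ha e]

/-- `End(T ⊗ S)`: the `S`-module of families of endomorphisms of the base-changed
representation `T ⊗ S` (with spaces `S ⊗[R] T p` and edge maps `T(f) ⊗ id_S`)
commuting with all the edge maps. -/
noncomputable def endRepS : Submodule S (∀ p : V, (S ⊗[R] T p) →ₗ[S] (S ⊗[R] T p)) where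
  carrier :=
    {a | ∀ e : E, (a (tgt e)).comp ((Tf e).baseChange S) = ((Tf e).baseChange S).comp (a (src e))}
  add_mem' := by
    intro a b ha hb e
    simp only [Pi.add_apply, LinearMap.add_comp, LinearMap.comp_add, ha e, hb e]
  zero_mem' := by
    intro e
    simp only [Pi.zero_apply, LinearMap.zero_comp, LinearMap.comp_zero]
  smul_mem' := by
    intro c a ha e
    simp only [Pi.smul_apply, LinearMap.smul_comp, LinearMap.comp_smul, ha e]

end

section PiHomBaseChange

variable (R S : Type*) [CommRing R] [CommRing S] [Algebra R S] [Module.Flat R S]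
variable {ι : Type*} [Fintype ι] [DecidableEq ι] (M N : ι → Type*)
  [∀ i, AddCommGroup (M i)] [∀ i, Module R (M i)] [∀ i, AddCommGroup (N i)]
  [∀ i, Module R (N i)]
  [∀ i, Module.FinitePresentation R (M i)]

noncomputable def piHomBaseChangeEquiv :
    S ⊗[R] (∀ i, M i →ₗ[R] N i) ≃ₗ[S] ∀ i, S ⊗[R] M i →ₗ[S] S ⊗[R] N i :=
  (piRight R S S _).trans <| LinearEquiv.piCongrRight fun i ↦
    (Module.FinitePresentation.isBaseChange_map R (M i) (N i) S).equiv

@[simp]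
lemma piHomBaseChangeEquiv_tmul (s : S) (f : ∀ i, M i →ₗ[R] N i) (i : ι) :
    piHomBaseChangeEquiv R S M N (s ⊗ₜ f) i = s • (f i).baseChange S := by
  simp [piHomBaseChangeEquiv, IsBaseChange.equiv_tmul]

end PiHomBaseChange

theorem LinearEquiv.map_eqLocus {A M N M' N' : Type*} [Semiring A] [AddCommMonoid M]
    [AddCommMonoid N] [AddCommMonoid M'] [AddCommMonoid N'] [Module A M] [Module A N]
    [Module A M'] [Module A N'] (e : M ≃ₗ[A] M') (e' : N ≃ₗ[A] N') {f g : M →ₗ[A] N}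
    {f' g' : M' →ₗ[A] N'} (hf : ∀ x, e' (f x) = f' (e x)) (hg : ∀ x, e' (g x) = g' (e x)) :
    (LinearMap.eqLocus f g).map (e : M →ₗ[A] M') = LinearMap.eqLocus f' g' := by
  ext x
  rw [Submodule.map_equiv_eq_comap_symm, Submodule.mem_comap, LinearMap.mem_eqLocus,
    LinearMap.mem_eqLocus, ← e'.injective.eq_iff, hf, hg, LinearEquiv.coe_coe, e.apply_symm_apply]

section EdgeMaps

variable {A : Type*} [CommRing A] {V E : Type*} (src tgt : E → V) {M : V → Type*}
  [∀ p, AddCommGroup (M p)] [∀ p, Module A (M p)] (φ : ∀ e, M (src e) →ₗ[A] M (tgt e))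

def compEdgeMaps : (∀ p, M p →ₗ[A] M p) →ₗ[A] ∀ e, M (src e) →ₗ[A] M (tgt e) :=
  LinearMap.pi fun e ↦ (LinearMap.lcomp A _ (φ e)).comp (LinearMap.proj (tgt e))

def edgeMapsComp : (∀ p, M p →ₗ[A] M p) →ₗ[A] ∀ e, M (src e) →ₗ[A] M (tgt e) :=
  LinearMap.pi fun e ↦ (LinearMap.llcomp A _ _ _ (φ e)).comp (LinearMap.proj (src e))

@[simp]
lemma compEdgeMaps_apply (a : ∀ p, M p →ₗ[A] M p) (e : E) :
    compEdgeMaps src tgt φ a e = a (tgt e) ∘ₗ φ e := rfl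

@[simp]
lemma edgeMapsComp_apply (a : ∀ p, M p →ₗ[A] M p) (e : E) :
    edgeMapsComp src tgt φ a e = φ e ∘ₗ a (src e) := rfl

end EdgeMaps

section FlatBaseChange

open LinearMap

variable {R : Type*} (S : Type*) [CommRing R] [CommRing S] [Algebra R S]
variable {V E : Type*} [Fintype V] [DecidableEq V] [Fintype E] [DecidableEq E]
  (src tgt : E → V) {M : V → Type*} [∀ p, AddCommGroup (M p)] [∀ p, Module R (M p)]
  [∀ p, Module.FinitePresentation R (M p)] (φ : ∀ e, M (src e) →ₗ[R] M (tgt e))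
variable [Module.Flat R S]

lemma piHomBaseChangeEquiv_lTensor_compEdgeMaps (x : S ⊗[R] ∀ p, M p →ₗ[R] M p) :
    piHomBaseChangeEquiv R S (fun e ↦ M (src e)) (fun e ↦ M (tgt e))
        (AlgebraTensorModule.lTensor S S (compEdgeMaps src tgt φ) x) =
      compEdgeMaps src tgt (fun e ↦ (φ e).baseChange S) (piHomBaseChangeEquiv R S M M x) := by
  induction x using TensorProduct.induction_on with
  | zero => simp
  | tmul s a => ext1 e; simp [baseChange_comp, smul_comp]
  | add x y hx hy => simp only [map_add, hx, hy]

lemma piHomBaseChangeEquiv_lTensor_edgeMapsComp (x : S ⊗[R] ∀ p, M p →ₗ[R] M p) :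
    piHomBaseChangeEquiv R S (fun e ↦ M (src e)) (fun e ↦ M (tgt e))
        (AlgebraTensorModule.lTensor S S (edgeMapsComp src tgt φ) x) =
      edgeMapsComp src tgt (fun e ↦ (φ e).baseChange S) (piHomBaseChangeEquiv R S M M x) := by
  induction x using TensorProduct.induction_on with
  | zero => simp
  | tmul s a => ext1 e; simp [baseChange_comp, comp_smul]
  | add x y hx hy => simp only [map_add, hx, hy]

noncomputable def tensorEqLocusEdgeMapsEquiv :
    S ⊗[R] eqLocus (compEdgeMaps src tgt φ) (edgeMapsComp src tgt φ) ≃ₗ[S]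
      eqLocus (compEdgeMaps src tgt (M := fun p ↦ S ⊗[R] M p) fun e ↦ (φ e).baseChange S)
        (edgeMapsComp src tgt fun e ↦ (φ e).baseChange S) :=
  (tensorEqLocusEquiv S S _ _).trans <| (piHomBaseChangeEquiv R S M M).ofSubmodules _ _ <|
    LinearEquiv.map_eqLocus _ (piHomBaseChangeEquiv R S _ _)
      (piHomBaseChangeEquiv_lTensor_compEdgeMaps S src tgt φ)
      (piHomBaseChangeEquiv_lTensor_edgeMapsComp S src tgt φ)

lemma tensorEqLocusEdgeMapsEquiv_tmul (s : S)
    (a : eqLocus (compEdgeMaps src tgt φ) (edgeMapsComp src tgt φ)) (p : V) :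
    (tensorEqLocusEdgeMapsEquiv S src tgt φ (s ⊗ₜ a)).1 p = s • (a.1 p).baseChange S := by
  simp [tensorEqLocusEdgeMapsEquiv]

end FlatBaseChange

section

variable {R S : Type*} [CommRing R] [CommRing S] [Algebra R S] [Module.Flat R S]
variable {V E : Type*} [Fintype V] [Fintype E]
variable (src tgt : E → V)
variable (T : V → Type*)
variable [∀ p, AddCommGroup (T p)] [∀ p, Module R (T p)]
variable [∀ p, Module.Projective R (T p)] [∀ p, Module.Finite R (T p)]
variable (Tf : ∀ e : E, T (src e) →ₗ[R] T (tgt e))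

/-- Let `R` be a commutative ring, `S` a flat commutative `R`-algebra
and `T` a representation of a finite quiver on finitely generated projective
`R`-modules. Then the natural `S`-linear map
`End(T) ⊗_R S → End(T ⊗ S)`, induced by `(e_p)_p ⊗ s ↦ (s · (e_p ⊗ id_S))_p`,
is bijective. -/
theorem endRep_baseChange_bijective :
    ∃ Φ : (S ⊗[R] (endRep src tgt T Tf)) →ₗ[S] (endRepS src tgt T Tf),
      (∀ (s : S) (a : endRep src tgt T Tf) (p : V),
        ((Φ (s ⊗ₜ[R] a)).val p)
          = s • ((a : ∀ p : V, T p →ₗ[R] T p) p).baseChange S) ∧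
      Function.Bijective Φ := by
  classical
  have := fun p ↦ Module.finitePresentation_of_projective R (T p)
  have hT : endRep src tgt T Tf =
      LinearMap.eqLocus (compEdgeMaps src tgt Tf) (edgeMapsComp src tgt Tf) := by
    ext a
    simp [endRep, funext_iff]
  have hTS : endRepS src tgt T Tf =
      LinearMap.eqLocus
        (compEdgeMaps src tgt (M := fun p ↦ S ⊗[R] T p) fun e ↦ (Tf e).baseChange S)
        (edgeMapsComp src tgt fun e ↦ (Tf e).baseChange S) := by
    ext a
    simp [endRepS, funext_iff]
  rw [hT, hTS]
  exact ⟨tensorEqLocusEdgeMapsEquiv S src tgt Tf, tensorEqLocusEdgeMapsEquiv_tmul S src tgt Tf,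
    LinearEquiv.bijective _⟩

end
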